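/- arXiv:2208.14860 — 5 statements merged into one kernel-verified Lean document; each statement's English description precedes it below -/
import Mathlib

section
/- For every positive integer c there exists N such that every integer k ≥ N can be written as a sum of exactly 20 squares of integers, each of which is strictly greater than c². -/
lemma sq_lt_sq_of_lt (c : ℕ) (y : ℤ) (h : (c:ℤ) < y) : (c:ℤ)^2 < y^2 := by
  have := Int.natCast_nonneg c
  nlinarith

set_option maxHeartbeats 1000000 in
lemma key (c : ℕ) (hc : 0 < c) : ∃ N : ℕ, ∀ n : ℕ, N ≤ n →
    ∃ x : Fin 20 → ℤ, (n:ℤ) = ∑ i, (x i) ^ 2 ∧ ∀ i, (c : ℤ) ^ 2 < (x i) ^ 2 := by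
  refine ⟨11*(c+1)^2 + (c+2)^2 + 16*(35+2*c)^2, fun n hn => ?_⟩
  set s : ℕ := c + 1 + (n - 11*(c+1)^2 + c + 1) % 2 with hs
  have hs1 : c + 1 ≤ s := by omega
  have hs2 : s ≤ c + 2 := by omega
  have hS : 11*(c+1)^2 + s^2 ≤ n := by nlinarith [sq_nonneg (35+2*c)]
  set m : ℕ := n - (11*(c+1)^2 + s^2) with hm
  have hmpar : m % 2 = 0 := by
    have : s % 2 = (n - 11*(c+1)^2) % 2 := by omega
    have hsq : s^2 % 2 = s % 2 := by
      conv_lhs => rw [Nat.pow_mod]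
      rcases Nat.mod_two_eq_zero_or_one s with h | h <;> simp [h]
    omega
  have hmT : 8*(35+2*c)^2 ≤ m := by
    have : s^2 ≤ (c+2)^2 := Nat.pow_le_pow_left hs2 2
    omega
  set t : ℕ := Nat.sqrt (m / 8) with ht
  have htT : 35 + 2*c ≤ t := by
    have h1 : (35+2*c)^2 ≤ m / 8 := by omega
    calc 35 + 2*c = Nat.sqrt ((35+2*c)^2) := (Nat.sqrt_eq' _).symm
    _ ≤ t := Nat.sqrt_le_sqrt h1
  have htsq : t^2 = t*t := sq t
  have ht1 : 8 * t^2 ≤ m := by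
    have h1 : t ^ 2 ≤ m / 8 := Nat.sqrt_le' (m / 8)
    omega
  have ht2 : m - 8*t^2 ≤ 16*t + 7 := by
    have h1 : m / 8 < (t+1) ^ 2 := Nat.lt_succ_sqrt' (m / 8)
    have h2 : (t+1)^2 = t^2 + 2*t + 1 := by ring
    omega
  obtain ⟨a, b, d, e, habde⟩ := Nat.sum_four_squares ((m - 8*t^2)/2)
  have hr : m = 8*t^2 + 2*(a^2+b^2+d^2+e^2) := by omega
  have key : ∀ w : ℕ, w^2 ≤ 8*t+3 → w + c + 1 ≤ t := by
    intro w hw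
    by_contra h
    push_neg at h
    have h1 : c + 35 ≤ w := by omega
    have h3 : (c+35)*w ≤ w*w := Nat.mul_le_mul_right w h1
    have h4 : c*36 ≤ c*w := Nat.mul_le_mul_left c (by omega)
    have h5 : (c+35)*w = c*w + 35*w := by ring
    have hw2 : w^2 = w*w := sq w
    omega
  have hbound : ∀ w : ℕ, w^2 ≤ a^2+b^2+d^2+e^2 → w + c + 1 ≤ t := by
    intro w hw
    exact key w (by omega)
  have ha : a + c + 1 ≤ t := hbound a (by nlinarith)
  have hb : b + c + 1 ≤ t := hbound b (by nlinarith)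
  have hd : d + c + 1 ≤ t := hbound d (by nlinarith)
  have he : e + c + 1 ≤ t := hbound e (by nlinarith)
  refine ⟨![(c:ℤ)+1, (c:ℤ)+1, (c:ℤ)+1, (c:ℤ)+1, (c:ℤ)+1, (c:ℤ)+1, (c:ℤ)+1, (c:ℤ)+1,
    (c:ℤ)+1, (c:ℤ)+1, (c:ℤ)+1, (s:ℤ), (t:ℤ)+a, (t:ℤ)-a, (t:ℤ)+b, (t:ℤ)-b,
    (t:ℤ)+d, (t:ℤ)-d, (t:ℤ)+e, (t:ℤ)-e], ?_, ?_⟩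
  · have hn2 : n = 11*(c+1)^2 + s^2 + 8*t^2 + 2*(a^2+b^2+d^2+e^2) := by omega
    have : (n:ℤ) = 11*((c:ℤ)+1)^2 + (s:ℤ)^2 + 8*(t:ℤ)^2 +
        2*((a:ℤ)^2+(b:ℤ)^2+(d:ℤ)^2+(e:ℤ)^2) := by exact_mod_cast congrArg (Nat.cast : ℕ → ℤ) hn2
    rw [this]
    simp [Fin.sum_univ_succ]
    ring
  · intro i
    have h1 : (c:ℤ) < (c:ℤ)+1 := by linarith
    have h2 : (c:ℤ) < (s:ℤ) := by exact_mod_cast Nat.lt_of_lt_of_le (Nat.lt_succ_self c) hs1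
    have hta : (c:ℤ) < (t:ℤ)-a := by
      have : (a:ℤ) + c + 1 ≤ t := by exact_mod_cast ha
      linarith
    have hta' : (c:ℤ) < (t:ℤ)+a := by have := Int.natCast_nonneg a; linarith
    have htb : (c:ℤ) < (t:ℤ)-b := by
      have : (b:ℤ) + c + 1 ≤ t := by exact_mod_cast hb
      linarith
    have htb' : (c:ℤ) < (t:ℤ)+b := by have := Int.natCast_nonneg b; linarith
    have htd : (c:ℤ) < (t:ℤ)-d := by
      have : (d:ℤ) + c + 1 ≤ t := by exact_mod_cast hd
      linarith
    have htd' : (c:ℤ) < (t:ℤ)+d := by have := Int.natCast_nonneg d; linarith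
    have hte : (c:ℤ) < (t:ℤ)-e := by
      have : (e:ℤ) + c + 1 ≤ t := by exact_mod_cast he
      linarith
    have hte' : (c:ℤ) < (t:ℤ)+e := by have := Int.natCast_nonneg e; linarith
    fin_cases i <;> simp <;>
      first
      | exact sq_lt_sq_of_lt c _ h1
      | exact sq_lt_sq_of_lt c _ h2
      | exact sq_lt_sq_of_lt c _ hta
      | exact sq_lt_sq_of_lt c _ hta'
      | exact sq_lt_sq_of_lt c _ htb
      | exact sq_lt_sq_of_lt c _ htb'
      | exact sq_lt_sq_of_lt c _ htd
      | exact sq_lt_sq_of_lt c _ htd'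
      | exact sq_lt_sq_of_lt c _ hte
      | exact sq_lt_sq_of_lt c _ hte'

theorem stmt0 (c : ℕ) (hc : 0 < c) : ∃ N : ℤ, ∀ k : ℤ, N ≤ k →
    ∃ x : Fin 20 → ℤ, k = ∑ i, (x i) ^ 2 ∧ ∀ i, (c : ℤ) ^ 2 < (x i) ^ 2 := by
  obtain ⟨N, hN⟩ := key c hc
  refine ⟨(N:ℤ), fun k hk => ?_⟩
  have h0 : 0 ≤ k := le_trans (Int.natCast_nonneg N) hk
  obtain ⟨x, hx1, hx2⟩ := hN k.toNat (by omega)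
  exact ⟨x, by rwa [Int.toNat_of_nonneg h0] at hx1, hx2⟩
end

section
/- For every positive integer c there exists N such that every integer k ≥ N which is divisible by 4 can be written as k = Σ_{i=1}^{80} aᵢ(aᵢ+1) with integers a₁,…,a₈₀ all at least c. -/
/-!
Since `(u + v)(u + v + 1) + (u - v)(u - v + 1) = 2u(u + 1) + 2v²`, four such pairs with a
common centre `u` and `v₀² + ⋯ + v₃² = Q` (Lagrange) give `8u(u + 1) + 2Q` as a sum of eight
pronic numbers. Taking `u` maximal with `8u(u + 1) ≤ K`, the even remainder `2Q` is below
`16(u + 1)`, so `Q ≤ (u - c)²` once `K` is large, and then all eight summands are at least `c`.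
The other 72 summands are `c(c + 1)`.
-/

open Finset

lemma pronic_add_pronic_sub {u v : ℕ} (h : v ≤ u) :
    (u + v) * (u + v + 1) + (u - v) * (u - v + 1) = 2 * (u * (u + 1) + v ^ 2) := by
  zify [h]; ring

lemma sum_pronic_append_add_sub {n : ℕ} (u : ℕ) (v : Fin n → ℕ) (hv : ∀ i, v i ≤ u) :
    ∑ i, Fin.append (fun j ↦ u + v j) (fun j ↦ u - v j) i
        * (Fin.append (fun j ↦ u + v j) (fun j ↦ u - v j) i + 1)
      = 2 * (n * (u * (u + 1)) + ∑ i, v i ^ 2) := by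
  simp only [Fin.sum_univ_add, Fin.append_left, Fin.append_right, ← sum_add_distrib,
    pronic_add_pronic_sub (hv _), ← mul_sum]
  simp [sum_add_distrib]

lemma exists_sum_eight_pronic (c d Q : ℕ) (hQ : Q ≤ d ^ 2) :
    ∃ b : Fin 8 → ℕ, (∀ i, c ≤ b i) ∧
      ∑ i, b i * (b i + 1) = 8 * ((c + d) * (c + d + 1)) + 2 * Q := by
  obtain ⟨v₀, v₁, v₂, v₃, hv⟩ := Nat.sum_four_squares Q
  set v : Fin 4 → ℕ := ![v₀, v₁, v₂, v₃]
  have hsum : ∑ i, v i ^ 2 = Q := by simp [v, Fin.sum_univ_four, hv]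
  have hvd : ∀ i, v i ≤ d := fun i ↦ (Nat.pow_le_pow_iff_left two_ne_zero).1 <|
    calc v i ^ 2 ≤ ∑ j, v j ^ 2 :=
        single_le_sum (fun j _ ↦ Nat.zero_le (v j ^ 2)) (mem_univ i)
      _ ≤ d ^ 2 := hsum ▸ hQ
  refine ⟨Fin.append (fun j ↦ (c + d) + v j) (fun j ↦ (c + d) - v j), ?_, ?_⟩
  · show ∀ i : Fin (4 + 4), _
    intro i
    induction i using Fin.addCases with
    | left j => simp only [Fin.append_left]; omega
    | right j => simp only [Fin.append_right]; grind [hvd j]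
  · rw [sum_pronic_append_add_sub _ _ (fun i ↦ (hvd i).trans (Nat.le_add_left _ _)), hsum]
    ring

lemma exists_pronic_le_lt (K : ℕ) : ∃ u, u * (u + 1) ≤ K ∧ K < (u + 1) * (u + 2) := by
  have hex : ∃ n, K < n * (n + 1) := ⟨K + 1, by nlinarith⟩
  obtain ⟨u, hu⟩ : ∃ u, Nat.find hex = u + 1 :=
    Nat.exists_eq_add_one.2 (Nat.pos_of_ne_zero fun h ↦ by simpa [h] using Nat.find_spec hex)
  refine ⟨u, not_lt.1 (Nat.find_min hex (by omega)), ?_⟩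
  simpa [hu] using Nat.find_spec hex

lemma exists_sum_eight_pronic_of_le (c K : ℕ) (hK : 2 ∣ K)
    (hKc : 8 * ((2 * c + 18) * (2 * c + 19)) ≤ K) :
    ∃ b : Fin 8 → ℕ, (∀ i, c ≤ b i) ∧ ∑ i, b i * (b i + 1) = K := by
  obtain ⟨u, hle, hlt⟩ := exists_pronic_le_lt (K / 8)
  have hu : 2 * c + 18 ≤ u := by
    by_contra! h
    have : (u + 1) * (u + 2) ≤ (2 * c + 18) * (2 * c + 19) := Nat.mul_le_mul (by omega) (by omega)
    omega
  obtain ⟨d, rfl⟩ : ∃ d, u = c + d := ⟨u - c, by omega⟩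
  obtain ⟨b, hbc, hb⟩ := exists_sum_eight_pronic c d ((K - 8 * ((c + d) * (c + d + 1))) / 2) (by
    have : (c + d + 1) * (c + d + 2) = (c + d) * (c + d + 1) + 2 * (c + d + 1) := by ring
    have : 8 * (c + d + 1) ≤ d ^ 2 := by nlinarith
    omega)
  exact ⟨b, hbc, by omega⟩

theorem stmt1 (c : ℕ) : ∃ N : ℕ, ∀ k : ℕ, N ≤ k → 4 ∣ k →
    ∃ a : Fin 80 → ℕ, (∀ i, c ≤ a i) ∧ k = ∑ i, a i * (a i + 1) := by
  refine ⟨72 * (c * (c + 1)) + 8 * ((2 * c + 18) * (2 * c + 19)), fun k hk hdvd ↦ ?_⟩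
  have hc : 2 ∣ c * (c + 1) := (Nat.even_mul_succ_self c).two_dvd
  obtain ⟨b, hbc, hb⟩ := 
    exists_sum_eight_pronic_of_le c (k - 72 * (c * (c + 1))) (by omega) (by omega)
  refine ⟨Fin.append b fun _ : Fin 72 ↦ c, ?_, ?_⟩
  · show ∀ i : Fin (8 + 72), _
    intro i
    induction i using Fin.addCases with
    | left j => simpa using hbc j
    | right j => simp
  · show k = ∑ i : Fin (8 + 72), _
    simp only [Fin.sum_univ_add, Fin.append_left, Fin.append_right, hb]
    simp only [sum_const, card_univ, Fintype.card_fin, smul_eq_mul]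
    omega
end

section
/- Let G₂ be a bipartite graph on parts A, B with |A| = |B| = m, and let G₁ be a subgraph of G₂. If every vertex of A has at least one G₁-neighbour and every vertex of B has G₂-degree at most d, then there exist A′ ⊆ A and B′ ⊆ B with |A′| = |B′| ≥ m/(4d²) such that both induced bipartite subgraphs G₁[A′,B′] and G₂[A′,B′] are perfect matchings between A′ and B′. -/
open Finset

lemma greedy_indep {γ : Type*} (c : γ → γ → Prop) [DecidableRel c]
    (hsymm : ∀ x y, c x y → c y x) (hirr : ∀ x, ¬ c x x) (D : ℕ) :
    ∀ V : Finset γ, (∀ W ⊆ V, W.Nonempty → ∃ v ∈ W,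
      (W.filter (fun w => c v w)).card ≤ D) →
    ∃ S ⊆ V, (∀ x ∈ S, ∀ y ∈ S, ¬ c x y) ∧ V.card ≤ (D + 1) * S.card := by
  classical
  intro V
  induction V using Finset.strongInduction with
  | _ V ih =>
    intro hdeg
    rcases V.eq_empty_or_nonempty with rfl | hne
    · exact ⟨∅, by simp⟩
    obtain ⟨v, hv, hvdeg⟩ := hdeg V le_rfl hne
    set X : Finset γ := insert v (V.filter (fun w => c v w)) with hX
    have hXV : X ⊆ V := by
      intro x hx
      rcases Finset.mem_insert.1 hx with rfl | hx
      · exact hv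
      · exact (Finset.mem_filter.1 hx).1
    have hssub : V \ X ⊂ V := Finset.sdiff_ssubset hXV ⟨v, Finset.mem_insert_self _ _⟩
    obtain ⟨S', hS'V, hind, hcard⟩ := ih (V \ X) hssub
      (fun W hW hWne => hdeg W (hW.trans Finset.sdiff_subset) hWne)
    have hvS' : v ∉ S' := fun h =>
      (Finset.mem_sdiff.1 (hS'V h)).2 (Finset.mem_insert_self v _)
    refine ⟨insert v S', ?_, ?_, ?_⟩
    · exact Finset.insert_subset hv (hS'V.trans Finset.sdiff_subset)
    · intro x hx y hy hc
      rcases Finset.mem_insert.1 hx with hxv | hx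
      · rcases Finset.mem_insert.1 hy with hyv | hy
        · exact hirr v (by rwa [hxv, hyv] at hc)
        · have hy' := Finset.mem_sdiff.1 (hS'V hy)
          exact hy'.2 (Finset.mem_insert_of_mem (Finset.mem_filter.2 ⟨hy'.1, by rwa [hxv] at hc⟩))
      · rcases Finset.mem_insert.1 hy with hyv | hy
        · have hx' := Finset.mem_sdiff.1 (hS'V hx)
          exact hx'.2 (Finset.mem_insert_of_mem (Finset.mem_filter.2 ⟨hx'.1, hsymm _ _ (by rwa [hyv] at hc)⟩))
        · exact hind x hx y hy hc
    · have h1 : V.card ≤ (V \ X).card + X.card := Finset.card_le_card_sdiff_add_card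
      have h2 : X.card ≤ D + 1 := by
        calc X.card ≤ (V.filter (fun w => c v w)).card + 1 := Finset.card_insert_le _ _
          _ ≤ D + 1 := by omega
      have h3 : (insert v S').card = S'.card + 1 := Finset.card_insert_of_notMem hvS'
      rw [h3, Nat.mul_add, Nat.mul_one]
      omega

theorem stmt14 {α β : Type*} [Fintype α] [Fintype β] (m d : ℕ) (hd : 1 ≤ d)
    (hA : Fintype.card α = m) (hB : Fintype.card β = m)
    (r₁ r₂ : α → β → Prop) (hsub : ∀ a b, r₁ a b → r₂ a b)
    (h1 : ∀ a, ∃ b, r₁ a b) (h2 : ∀ b, {a | r₂ a b}.ncard ≤ d) :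
    ∃ (A' : Set α) (B' : Set β), A'.ncard = B'.ncard ∧ m ≤ 4 * d ^ 2 * A'.ncard ∧
      (∀ a ∈ A', ∃! b, b ∈ B' ∧ r₁ a b) ∧ (∀ b ∈ B', ∃! a, a ∈ A' ∧ r₁ a b) ∧
      (∀ a ∈ A', ∃! b, b ∈ B' ∧ r₂ a b) ∧ (∀ b ∈ B', ∃! a, a ∈ A' ∧ r₂ a b) := by
  classical
  by_cases hα : Nonempty α
  swap
  · have hm0 : m = 0 := by
      rw [← hA, Fintype.card_eq_zero_iff]
      exact not_nonempty_iff.mp hα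
    exact ⟨∅, ∅, by simp, by simp [hm0], by simp, by simp, by simp, by simp⟩
  obtain ⟨a0⟩ := hα
  -- choose a r₁-neighbour for each a
  set f : α → β := fun a => (h1 a).choose with hfdef
  have hrf : ∀ a, r₁ a (f a) := fun a => (h1 a).choose_spec
  set B₀ : Finset β := Finset.univ.image f with hB₀
  set g : β → α := fun b => if h : ∃ a, f a = b then h.choose else a0 with hgdef
  have hfg : ∀ b ∈ B₀, f (g b) = b := by
    intro b hb
    obtain ⟨a, -, ha⟩ := Finset.mem_image.1 hb
    have hex : ∃ a, f a = b := ⟨a, ha⟩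
    simp only [hgdef, dif_pos hex]
    exact hex.choose_spec
  have hd2 : ∀ b : β, ({a | r₂ a b}.toFinset).card ≤ d := by
    intro b
    rw [← Set.ncard_eq_toFinset_card']
    exact h2 b
  -- m ≤ d * |B₀|
  have hmB : m ≤ d * B₀.card := by
    have h : (Finset.univ : Finset α).card ≤ d * B₀.card := by
      apply Finset.card_le_mul_card_image
      intro b _
      calc (Finset.univ.filter (fun x => f x = b)).card
          ≤ ({a | r₂ a b}.toFinset).card := by
            apply Finset.card_le_card
            intro x hx
            have hx' := (Finset.mem_filter.1 hx).2
            simp only [Set.mem_toFinset, Set.mem_setOf_eq]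
            exact hx' ▸ hsub _ _ (hrf x)
        _ ≤ d := hd2 b
    rwa [Finset.card_univ, hA] at h
  -- key counting lemma
  have hkey : ∀ W ⊆ B₀, ∀ b ∈ W,
      (W.filter (fun b' => ¬ b' = b ∧ r₂ (g b') b)).card ≤ d - 1 := by
    intro W hW b hb
    have hgb : r₂ (g b) b := by
      have h := hsub _ _ (hrf (g b))
      rwa [hfg b (hW hb)] at h
    have hle : (W.filter (fun b' => ¬ b' = b ∧ r₂ (g b') b)).card ≤
        (({a | r₂ a b}.toFinset).erase (g b)).card := by
      apply Finset.card_le_card_of_injOn g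
      · intro b' hb'
        obtain ⟨hb'W, hne, hr⟩ := Finset.mem_filter.1 hb'
        refine Finset.mem_erase.2 ⟨?_, by simpa using hr⟩
        intro h
        apply hne
        have h2 := congrArg f h
        rwa [hfg b' (hW hb'W), hfg b (hW hb)] at h2
      · intro x hx y hy hxy
        have hxW := (Finset.mem_filter.1 hx).1
        have hyW := (Finset.mem_filter.1 hy).1
        have h2 := congrArg f hxy
        rwa [hfg x (hW hxW), hfg y (hW hyW)] at h2
    calc _ ≤ _ := hle
      _ = ({a | r₂ a b}.toFinset).card - 1 :=
        Finset.card_erase_of_mem (by simpa using hgb)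
      _ ≤ d - 1 := Nat.sub_le_sub_right (hd2 b) 1
  -- the conflict relation
  set c : β → β → Prop := fun b b' => ¬ b = b' ∧ (r₂ (g b) b' ∨ r₂ (g b') b) with hc
  have hsymm : ∀ x y, c x y → c y x := by
    intro x y ⟨hne, h⟩
    exact ⟨fun e => hne e.symm, h.symm⟩
  have hirr : ∀ x, ¬ c x x := fun x h => h.1 rfl
  -- degree hypothesis
  have hdeg : ∀ W ⊆ B₀, W.Nonempty →
      ∃ v ∈ W, (W.filter (fun w => c v w)).card ≤ 2 * (d - 1) := by
    intro W hW hWne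
    by_contra hcon
    push_neg at hcon
    have split : ∀ b ∈ W, (W.filter (fun w => c b w)).card ≤
        (W.filter (fun w => ¬ b = w ∧ r₂ (g b) w)).card +
        (W.filter (fun w => ¬ w = b ∧ r₂ (g w) b)).card := by
      intro b _
      calc (W.filter (fun w => c b w)).card
          ≤ ((W.filter (fun w => ¬ b = w ∧ r₂ (g b) w)) ∪
             (W.filter (fun w => ¬ w = b ∧ r₂ (g w) b))).card := by
            apply Finset.card_le_card
            intro w hw
            obtain ⟨hwW, hne, hr⟩ := Finset.mem_filter.1 hw
            rcases hr with hr | hr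
            · exact Finset.mem_union_left _ (Finset.mem_filter.2 ⟨hwW, hne, hr⟩)
            · exact Finset.mem_union_right _
                (Finset.mem_filter.2 ⟨hwW, fun e => hne e.symm, hr⟩)
        _ ≤ _ := Finset.card_union_le _ _
    have hswap : ∑ b ∈ W, (W.filter (fun w => ¬ b = w ∧ r₂ (g b) w)).card
        = ∑ w ∈ W, (W.filter (fun b => ¬ b = w ∧ r₂ (g b) w)).card := by
      simp only [Finset.card_filter]
      exact Finset.sum_comm
    have hsum1 : ∑ w ∈ W, (W.filter (fun b => ¬ b = w ∧ r₂ (g b) w)).card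
        ≤ (d - 1) * W.card := by
      calc _ ≤ ∑ _w ∈ W, (d - 1) := Finset.sum_le_sum (fun w hw => hkey W hW w hw)
        _ = (d - 1) * W.card := by rw [Finset.sum_const, smul_eq_mul, mul_comm]
    have hsum2 : ∑ b ∈ W, (W.filter (fun w => ¬ w = b ∧ r₂ (g w) b)).card
        ≤ (d - 1) * W.card := by
      calc _ ≤ ∑ _b ∈ W, (d - 1) := Finset.sum_le_sum (fun b hb => hkey W hW b hb)
        _ = (d - 1) * W.card := by rw [Finset.sum_const, smul_eq_mul, mul_comm]
    have htot : ∑ b ∈ W, (W.filter (fun w => c b w)).card ≤ 2 * (d - 1) * W.card := by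
      calc ∑ b ∈ W, (W.filter (fun w => c b w)).card
          ≤ ∑ b ∈ W, ((W.filter (fun w => ¬ b = w ∧ r₂ (g b) w)).card +
            (W.filter (fun w => ¬ w = b ∧ r₂ (g w) b)).card) :=
            Finset.sum_le_sum split
        _ = (∑ b ∈ W, (W.filter (fun w => ¬ b = w ∧ r₂ (g b) w)).card) +
            ∑ b ∈ W, (W.filter (fun w => ¬ w = b ∧ r₂ (g w) b)).card :=
            Finset.sum_add_distrib
        _ ≤ (d - 1) * W.card + (d - 1) * W.card := by
            rw [hswap]; exact Nat.add_le_add hsum1 hsum2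
        _ = 2 * (d - 1) * W.card := by ring
    have hlow : (2 * (d - 1) + 1) * W.card ≤
        ∑ b ∈ W, (W.filter (fun w => c b w)).card := by
      calc (2 * (d - 1) + 1) * W.card = ∑ _b ∈ W, (2 * (d - 1) + 1) := by
            rw [Finset.sum_const, smul_eq_mul, mul_comm]
        _ ≤ _ := Finset.sum_le_sum (fun b hb => hcon b hb)
    have hpos : 0 < W.card := hWne.card_pos
    nlinarith
  obtain ⟨S, hSB₀, hind, hScard⟩ := greedy_indep c hsymm hirr (2 * (d - 1)) B₀ hdeg
  -- g is injective on S
  have hginj : Set.InjOn g ↑S := by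
    intro x hx y hy hxy
    have h2 := congrArg f hxy
    rwa [hfg x (hSB₀ hx), hfg y (hSB₀ hy)] at h2
  have hr2gb : ∀ b ∈ S, r₂ (g b) b := by
    intro b hb
    have h := hsub _ _ (hrf (g b))
    rwa [hfg b (hSB₀ hb)] at h
  have hr1gb : ∀ b ∈ S, r₁ (g b) b := by
    intro b hb
    have h := hrf (g b)
    rwa [hfg b (hSB₀ hb)] at h
  refine ⟨g '' ↑S, ↑S, ?_, ?_, ?_, ?_, ?_, ?_⟩
  · rw [Set.ncard_image_of_injOn hginj]
  · -- cardinality bound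
    rw [Set.ncard_image_of_injOn hginj, Set.ncard_coe_finset]
    obtain ⟨e, rfl⟩ : ∃ e, d = 1 + e := ⟨d - 1, by omega⟩
    have he : 1 + e - 1 = e := by omega
    rw [he] at hScard
    nlinarith
  · -- r₁ : a side
    rintro a ⟨b, hbS, rfl⟩
    refine ⟨b, ⟨hbS, hr1gb b hbS⟩, ?_⟩
    rintro y ⟨hyS, hy⟩
    by_contra hne
    exact hind b hbS y hyS ⟨fun e => hne e.symm, Or.inl (hsub _ _ hy)⟩
  · -- r₁ : b side
    intro b hbS
    refine ⟨g b, ⟨⟨b, hbS, rfl⟩, hr1gb b hbS⟩, ?_⟩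
    rintro a ⟨⟨b', hb'S, rfl⟩, ha⟩
    have hb'b : b' = b := by
      by_contra hne
      exact hind b' hb'S b hbS ⟨hne, Or.inl (hsub _ _ ha)⟩
    rw [hb'b]
  · -- r₂ : a side
    rintro a ⟨b, hbS, rfl⟩
    refine ⟨b, ⟨hbS, hr2gb b hbS⟩, ?_⟩
    rintro y ⟨hyS, hy⟩
    by_contra hne
    exact hind b hbS y hyS ⟨fun e => hne e.symm, Or.inl hy⟩
  · -- r₂ : b side
    intro b hbS
    refine ⟨g b, ⟨⟨b, hbS, rfl⟩, hr2gb b hbS⟩, ?_⟩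
    rintro a ⟨⟨b', hb'S, rfl⟩, ha⟩
    have hb'b : b' = b := by
      by_contra hne
      exact hind b' hb'S b hbS ⟨hne, Or.inl ha⟩
    rw [hb'b]
end

section
/- Let G be a graph and ℓ ≥ 1. Then either G contains ℓ pairwise vertex-disjoint induced copies of K_{ℓ,ℓ} with no edges between distinct copies, or G contains an induced subgraph H with χ(H) ≥ χ(G)/(2ℓ²) − 1 such that either ω(H) < ω(G) or H contains no induced copy of K_{ℓ,ℓ}. -/
/-!
Grow a family of pairwise non-adjacent induced copies of `K_{ℓ,ℓ}` one copy at a time. If a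
family of `n < ℓ` copies with vertex set `D` cannot be extended, then the set `R` of vertices
outside the closed neighbourhood of `D` contains no induced `K_{ℓ,ℓ}`. The vertex set is covered
by `R` and the `|D| ≤ 2ℓ(ℓ - 1)` closed neighbourhoods `N[v]`, `v ∈ D`, and
`χ(N[v]) ≤ χ(N(v)) + 1`. So if `X` maximises `χ(G[X])` among `R` and the `N(v)`, then
`χ(G) ≤ (|D| + 1)(χ(G[X]) + 1) ≤ 2ℓ²(χ(G[X]) + 1)`. Either `X = R`, or `X = N(v)` and
`ω(G[X]) < ω(G)` since `v` extends every clique of its neighbourhood.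
-/

namespace SimpleGraph

open Finset

variable {V : Type*} {G : SimpleGraph V}

theorem colorable_card_mul_of_cover {ι : Type*} (s : Finset ι) (A : ι → Set V) {k : ℕ}
    (hcov : ∀ v, ∃ i ∈ s, v ∈ A i) (hcol : ∀ i ∈ s, (G.induce (A i)).Colorable k) :
    G.Colorable (#s * k) := by
  choose f hfs hfA using hcov
  have c := fun i (hi : i ∈ s) => (hcol i hi).some
  have hc : ∀ i j (hi : i ∈ s) (hj : j ∈ s) (x : A i) (y : A j), i = j → G.Adj x y →
      c i hi x ≠ c j hj y := by
    rintro i j hi hj x y rfl hxy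
    exact (c i hi).valid hxy
  let C : G.Coloring (s × Fin k) := Coloring.mk
    (fun v => (⟨f v, hfs v⟩, c (f v) (hfs v) ⟨v, hfA v⟩)) fun {u w} huw heq => by
      simp only [Prod.mk.injEq, Subtype.mk.injEq] at heq
      exact hc _ _ _ _ ⟨u, hfA u⟩ ⟨w, hfA w⟩ heq.1 huw heq.2
  simpa using C.colorable

theorem Colorable.induce_insert {s : Set V} {n : ℕ} (h : (G.induce s).Colorable n) (v : V) :
    (G.induce (insert v s)).Colorable (n + 1) := by
  obtain ⟨c⟩ := h
  classical
  refine ⟨Coloring.mk (fun u => if hu : u.1 = v then Fin.last n else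
    (c ⟨u.1, (Set.mem_insert_iff.mp u.2).resolve_left hu⟩).castSucc) ?_⟩
  rintro ⟨a, ha⟩ ⟨b, hb⟩ hab heq
  have hab' : G.Adj a b := hab
  by_cases hav : a = v <;> by_cases hbv : b = v
  · exact G.loopless.irrefl v (by rwa [hav, hbv] at hab')
  · simp only [dif_pos hav, dif_neg hbv] at heq
    exact (Fin.castSucc_lt_last _).ne' heq
  · simp only [dif_neg hav, dif_pos hbv] at heq
    exact (Fin.castSucc_lt_last _).ne heq
  · simp only [dif_neg hav, dif_neg hbv, Fin.castSucc_inj] at heq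
    exact c.valid (by exact hab') heq

theorem cliqueNum_induce_neighborSet_lt [Finite V] (v : V) :
    (G.induce (G.neighborSet v)).cliqueNum < G.cliqueNum := by
  classical
  obtain ⟨t, ht⟩ := (G.induce (G.neighborSet v)).exists_isNClique_cliqueNum
  rw [isNClique_induce_iff] at ht
  have hvt : G.IsNClique (_ + 1) (insert v (t.map (.subtype _))) :=
    ht.insert fun b hb => by
      obtain ⟨⟨b, hbv⟩, -, rfl⟩ := Finset.mem_map.1 hb
      exact hbv
  have := hvt.isClique.card_le_cliqueNum
  rw [hvt.card_eq] at this
  omega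

theorem colorable_of_induce_neighborSet {D : Finset V} {k : ℕ}
    (hR : (G.induce (⋃ w ∈ D, insert w (G.neighborSet w))ᶜ).Colorable k)
    (hN : ∀ v ∈ D, (G.induce (G.neighborSet v)).Colorable k) :
    G.Colorable ((#D + 1) * (k + 1)) := by
  let A : Option V → Set V :=
    fun o => o.elim (⋃ w ∈ D, insert w (G.neighborSet w))ᶜ fun w => insert w (G.neighborSet w)
  have hcov : ∀ u, ∃ o ∈ D.insertNone, u ∈ A o := by
    intro u
    by_cases hu : u ∈ ⋃ w ∈ D, insert w (G.neighborSet w)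
    · obtain ⟨w, hw, huw⟩ := Set.mem_iUnion₂.1 hu
      exact ⟨some w, some_mem_insertNone.2 hw, huw⟩
    · exact ⟨none, none_mem_insertNone, hu⟩
  have hcol : ∀ o ∈ D.insertNone, (G.induce (A o)).Colorable (k + 1) :=
    forall_mem_insertNone.2 ⟨hR.mono k.le_succ, fun v hv => (hN v hv).induce_insert v⟩
  simpa using colorable_card_mul_of_cover _ A hcov hcol

variable {W : Type*}

structure IsInducedPacking (G : SimpleGraph V) (H : SimpleGraph W) {n : ℕ}
    (S : Fin n → Set V) : Prop where
  disjoint : ∀ i j, i ≠ j → Disjoint (S i) (S j)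
  iso : ∀ i, Nonempty (G.induce (S i) ≃g H)
  not_adj : ∀ i j, i ≠ j → ∀ a ∈ S i, ∀ b ∈ S j, ¬ G.Adj a b

namespace IsInducedPacking

variable {H : SimpleGraph W} {n : ℕ} {S : Fin n → Set V}

theorem cons (hS : IsInducedPacking G H S) {T : Set V} (hT : Nonempty (G.induce T ≃g H))
    (hST : ∀ i, ∀ a ∈ S i, ∀ b ∈ T, a ≠ b ∧ ¬ G.Adj a b) :
    IsInducedPacking G H (Fin.cons T S : Fin (n + 1) → Set V) where
  disjoint := by
    refine pairwise_fin_succ_iff.2 ⟨fun i => ?_, fun j => ?_, fun i j hij => hS.disjoint i j hij⟩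
    · exact Set.disjoint_left.2 fun a ha haT => (hST i a ha a haT).1 rfl
    · exact Set.disjoint_right.2 fun a ha haT => (hST j a ha a haT).1 rfl
  iso := Fin.cases hT hS.iso
  not_adj := by
    refine pairwise_fin_succ_iff.2 ⟨fun i => ?_, fun j => ?_, fun i j hij => hS.not_adj i j hij⟩
    · exact fun a ha b hb => (hST i a ha b hb).2
    · exact fun a ha b hb hab => (hST j b hb a ha).2 hab.symm

theorem ncard_iUnion_le (hS : IsInducedPacking G H S) :
    (⋃ i, S i).ncard ≤ n * Nat.card W := by
  have hcard : ∀ i, (S i).ncard = Nat.card W := fun i =>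
    (Nat.card_coe_set_eq _).symm.trans (Nat.card_congr (hS.iso i).some.toEquiv)
  simpa [hcard] using Set.ncard_iUnion_le_of_fintype S

theorem exists_succ_or_exists_induce [Finite V] (hS : IsInducedPacking G H S) {c : ℕ}
    (hc : n * Nat.card W < c) :
    (∃ S' : Fin (n + 1) → Set V, IsInducedPacking G H S') ∨
      ∃ X : Set V, G.chromaticNumber ≤ c * ((G.induce X).chromaticNumber + 1) ∧
        ((G.induce X).cliqueNum < G.cliqueNum ∨
          ∀ T ⊆ X, ¬ Nonempty (G.induce T ≃g H)) := by
  set D := (Set.toFinite (⋃ i, S i)).toFinset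
  set R := (⋃ w ∈ D, insert w (G.neighborSet w))ᶜ
  by_cases hR : ∃ T ⊆ R, Nonempty (G.induce T ≃g H)
  · obtain ⟨T, hTR, hT⟩ := hR
    refine Or.inl ⟨_, hS.cons hT fun i a ha b hb => ?_⟩
    have hb : b ∉ insert a (G.neighborSet a) := fun hab => hTR hb <| Set.mem_iUnion₂.2
      ⟨a, (Set.Finite.mem_toFinset _).2 (Set.mem_iUnion.2 ⟨i, ha⟩), hab⟩
    simp only [Set.mem_insert_iff, mem_neighborSet, not_or] at hb
    exact ⟨Ne.symm hb.1, hb.2⟩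
  right
  classical
  let B : Option V → Set V := fun o => o.elim R G.neighborSet
  obtain ⟨o, -, hmax⟩ := D.insertNone.exists_max_image
    (fun o => (G.induce (B o)).chromaticNumber) insertNone_nonempty
  set k := (G.induce (B o)).chromaticNumber.toNat
  have hk : (G.induce (B o)).chromaticNumber = k :=
    (ENat.natCast_toNat (chromaticNumber_ne_top_iff_exists.2
      ⟨_, colorable_chromaticNumber_of_fintype _⟩)).symm
  have hBk : ∀ o' ∈ D.insertNone, (G.induce (B o')).Colorable k := fun o' ho' =>
    chromaticNumber_le_iff_colorable.1 (hk ▸ hmax o' ho')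
  have hG : G.Colorable ((#D + 1) * (k + 1)) := colorable_of_induce_neighborSet
    (hBk none none_mem_insertNone) fun v hv => hBk (some v) (some_mem_insertNone.2 hv)
  have hD : #D + 1 ≤ c := by
    have hDcard : #D = (⋃ i, S i).ncard := (Set.ncard_eq_toFinset_card _ _).symm
    have := hS.ncard_iUnion_le
    omega
  refine ⟨B o, ?_, ?_⟩
  · calc G.chromaticNumber ≤ ((#D + 1) * (k + 1) : ℕ) := hG.chromaticNumber_le
      _ ≤ (c * (k + 1) : ℕ) := by gcongr
      _ = c * ((G.induce (B o)).chromaticNumber + 1) := by rw [hk]; push_cast; rfl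
  · cases o with
    | none => exact Or.inr fun T hT hTH => hR ⟨T, hT, hTH⟩
    | some v => exact Or.inl (cliqueNum_induce_neighborSet_lt v)

end IsInducedPacking

theorem exists_isInducedPacking_or_exists_induce [Finite V] (H : SimpleGraph W) {N c : ℕ}
    (hc : ∀ n < N, n * Nat.card W < c) :
    (∃ S : Fin N → Set V, IsInducedPacking G H S) ∨
      ∃ X : Set V, G.chromaticNumber ≤ c * ((G.induce X).chromaticNumber + 1) ∧
        ((G.induce X).cliqueNum < G.cliqueNum ∨
          ∀ T ⊆ X, ¬ Nonempty (G.induce T ≃g H)) := by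
  induction N with
  | zero => exact Or.inl ⟨finZeroElim, finZeroElim, finZeroElim, finZeroElim⟩
  | succ n ih =>
    obtain ⟨S, hS⟩ | hX := ih fun m hm => hc m (by omega)
    · exact hS.exists_succ_or_exists_induce (hc n n.lt_succ_self)
    · exact Or.inr hX

end SimpleGraph

theorem stmt16_general {V : Type*} [Fintype V] (G : SimpleGraph V) (ℓ : ℕ) :
    (∃ S : Fin ℓ → Set V,
      (∀ i j, i ≠ j → Disjoint (S i) (S j)) ∧
      (∀ i, Nonempty (G.induce (S i) ≃g completeBipartiteGraph (Fin ℓ) (Fin ℓ))) ∧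
      (∀ i j, i ≠ j → ∀ a ∈ S i, ∀ b ∈ S j, ¬ G.Adj a b)) ∨
    (∃ S : Set V,
      G.chromaticNumber ≤ 2 * ℓ ^ 2 * ((G.induce S).chromaticNumber + 1) ∧
      ((G.induce S).cliqueNum < G.cliqueNum ∨
        ∀ T : Set V, T ⊆ S →
          ¬ Nonempty (G.induce T ≃g completeBipartiteGraph (Fin ℓ) (Fin ℓ)))) := by
  have hc : ∀ n < ℓ, n * Nat.card (Fin ℓ ⊕ Fin ℓ) < 2 * ℓ ^ 2 := fun n hn => by
    simp only [Nat.card_eq_fintype_card, Fintype.card_sum, Fintype.card_fin]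
    nlinarith
  obtain ⟨S, hS⟩ | ⟨X, hχ, hX⟩ :=
    G.exists_isInducedPacking_or_exists_induce (completeBipartiteGraph (Fin ℓ) (Fin ℓ)) hc
  · exact Or.inl ⟨S, hS.disjoint, hS.iso, hS.not_adj⟩
  · exact Or.inr ⟨X, by exact_mod_cast hχ, hX⟩

theorem stmt16 {V : Type*} [Fintype V] (G : SimpleGraph V) (ℓ : ℕ) (hℓ : 1 ≤ ℓ) :
    (∃ S : Fin ℓ → Set V,
      (∀ i j, i ≠ j → Disjoint (S i) (S j)) ∧
      (∀ i, Nonempty (G.induce (S i) ≃g completeBipartiteGraph (Fin ℓ) (Fin ℓ))) ∧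
      (∀ i j, i ≠ j → ∀ a ∈ S i, ∀ b ∈ S j, ¬ G.Adj a b)) ∨
    (∃ S : Set V,
      G.chromaticNumber ≤ 2 * ℓ ^ 2 * ((G.induce S).chromaticNumber + 1) ∧
      ((G.induce S).cliqueNum < G.cliqueNum ∨
        ∀ T : Set V, T ⊆ S →
          ¬ Nonempty (G.induce T ≃g completeBipartiteGraph (Fin ℓ) (Fin ℓ)))) :=
  stmt16_general G ℓ
end

section
/- Let G be a graph containing an induced cycle C and a vertex v ∉ V(C) adjacent to at least k+2 vertices of C, and suppose |C| ≥ k+4. Then for every ℓ with 0 ≤ ℓ ≤ k, G contains a cycle with exactly ℓ chords. -/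
/-!
Let `A` be a subpath of `C` whose ends `a`, `b` are neighbours of `v` and which has exactly `ℓ`
neighbours of `v` in its interior. Closing `A` up through `v` gives a cycle, and since `C` is
induced and `A` misses a vertex of `C`, its chords are exactly the edges from `v` to those `ℓ`
interior neighbours. To find `A`, delete one vertex `x` of `C`: this leaves an induced path, and
any `ℓ + 2` consecutive neighbours of `v` along it span a suitable `A`. Taking `x` to be a
non-neighbour of `v` keeps all `≥ k + 2` neighbours; if there is none, every one of the
`|C| - 1 ≥ k + 3` remaining vertices is a neighbour.
-/

/-- The set of chords of a closed walk `C` in `G`. -/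
def cycleChords {V : Type*} (G : SimpleGraph V) {u : V} (C : G.Walk u u) : Set (Sym2 V) :=
  {e | e ∈ G.edgeSet ∧ (∀ v ∈ e, v ∈ C.support) ∧ e ∉ C.edges}

open Finset

theorem Finset.exists_mem_card_filter_lt_eq {α : Type*} [LinearOrder α] {s : Finset α} {ℓ : ℕ}
    (h : ℓ < #s) : ∃ j ∈ s, #{i ∈ s | i < j} = ℓ := by
  induction s using Finset.induction_on_max with
  | empty => simp at h
  | insert a s hlt ih =>
    have ha : a ∉ s := fun has ↦ (hlt a has).false
    rw [card_insert_of_notMem ha] at h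
    rcases Nat.lt_succ_iff_lt_or_eq.1 h with h | rfl
    · obtain ⟨j, hj, hcard⟩ := ih h
      refine ⟨j, mem_insert_of_mem hj, ?_⟩
      rwa [filter_insert, if_neg (hlt j hj).not_gt]
    · refine ⟨a, mem_insert_self a s, ?_⟩
      rw [filter_insert, if_neg (lt_irrefl a), filter_true_of_mem hlt]

theorem Finset.exists_lt_card_filter_between_eq {α : Type*} [LinearOrder α] {s : Finset α}
    {ℓ : ℕ} (h : ℓ + 2 ≤ #s) : ∃ i ∈ s, ∃ j ∈ s, i < j ∧ #{t ∈ s | i < t ∧ t < j} = ℓ := by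
  obtain ⟨j, hj, hcard⟩ := exists_mem_card_filter_lt_eq (s := s) (ℓ := ℓ + 1) (by omega)
  have hne : ({t ∈ s | t < j}).Nonempty := by rw [← card_pos]; omega
  set i := ({t ∈ s | t < j}).min' hne
  have hi := (mem_filter.1 (min'_mem _ hne))
  refine ⟨i, hi.1, j, hj, hi.2, ?_⟩
  have : {t ∈ s | i < t ∧ t < j} = ({t ∈ s | t < j}).erase i := by
    ext t
    simp only [mem_filter, mem_erase]
    constructor
    · rintro ⟨hts, hit, htj⟩
      exact ⟨hit.ne', hts, htj⟩
    · rintro ⟨hti, hts, htj⟩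
      exact ⟨hts, lt_of_le_of_ne (min'_le _ t (mem_filter.2 ⟨hts, htj⟩)) (Ne.symm hti), htj⟩
  rw [this, card_erase_of_mem (min'_mem _ hne), hcard, Nat.add_sub_cancel]

namespace SimpleGraph.Walk

variable {V : Type*} {G : SimpleGraph V}

theorem IsPath.eq_of_mem_support_append {u v w x : V} {p : G.Walk u v} {q : G.Walk v w}
    (h : (p.append q).IsPath) (hp : x ∈ p.support) (hq : x ∈ q.support) : x = v := by
  rw [isPath_def, support_append, List.nodup_append] at h
  rcases q.mem_support_iff.1 hq with rfl | hq
  · rfl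
  · exact absurd rfl (h.2.2 x hp x hq)

theorem IsPath.isChordless_of_isSubwalk {u v u' v' : V} {p : G.Walk u v} {q : G.Walk u' v'}
    (hq : q.IsPath) (hpq : p.IsSubwalk q)
    (h : ∀ ⦃y z⦄, y ∈ p.support → z ∈ p.support → G.Adj y z → s(y, z) ∈ q.edges) :
    p.IsChordless := by
  obtain ⟨r₁, r₂, rfl⟩ := hpq
  rw [isChordless_iff_forall_mem_edges]
  intro y z hy hz hyz
  have hq₁ := hq.of_append_left
  have hq_edge := h hy hz hyz
  simp only [edges_append, List.mem_append] at hq_edge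
  -- an edge of `r₁` or `r₂` with both ends on `p` would be a loop at the junction vertex
  rcases hq_edge with (h₁ | hp) | h₂
  · have hy' := hq₁.eq_of_mem_support_append (r₁.fst_mem_support_of_mem_edges h₁) hy
    have hz' := hq₁.eq_of_mem_support_append (r₁.snd_mem_support_of_mem_edges h₁) hz
    exact absurd (hy'.trans hz'.symm) hyz.ne
  · exact hp
  · have hy' := hq.eq_of_mem_support_append (by simp [hy]) (r₂.fst_mem_support_of_mem_edges h₂)
    have hz' := hq.eq_of_mem_support_append (by simp [hz]) (r₂.snd_mem_support_of_mem_edges h₂)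
    exact absurd (hy'.trans hz'.symm) hyz.ne

theorem IsChordless.of_isSubwalk {u v u' v' : V} {p : G.Walk u v} {q : G.Walk u' v'}
    (hq : q.IsPath) (hc : q.IsChordless) (hpq : p.IsSubwalk q) : p.IsChordless :=
  hq.isChordless_of_isSubwalk hpq fun _ _ hy hz ↦
    hc.mem_edges (hpq.support_subset hy) (hpq.support_subset hz)

theorem IsChordless.rotate [DecidableEq V] {u v : V} {c : G.Walk v v} (hc : c.IsChordless)
    (hu : u ∈ c.support) : (c.rotate u hu).IsChordless := by
  rw [isChordless_iff_forall_mem_edges] at hc ⊢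
  intro y z hy hz hyz
  rw [(rotate_edges c u hu).mem_iff]
  exact hc ((mem_support_rotate_iff c u hu).1 hy) ((mem_support_rotate_iff c u hu).1 hz) hyz

theorem IsCycle.support_tail_dropLast_concat {u : V} {c : G.Walk u u} (hc : c.IsCycle) :
    c.tail.dropLast.support ++ [u] = c.support.tail := by
  have : ¬ c.tail.Nil := by
    rw [← length_eq_zero_iff, length_tail]; have := hc.three_le_length; omega
  rw [support_dropLast_concat this, support_tail_of_not_nil _ hc.not_nil]

theorem IsCycle.notMem_support_tail_dropLast {u : V} {c : G.Walk u u} (hc : c.IsCycle) :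
    u ∉ c.tail.dropLast.support := by
  have := hc.support_nodup
  rw [← hc.support_tail_dropLast_concat, List.nodup_append] at this
  exact fun h ↦ this.2.2 u h u (List.mem_singleton_self u) rfl

theorem IsCycle.mem_support_iff_tail_dropLast {u w : V} {c : G.Walk u u} (hc : c.IsCycle) :
    w ∈ c.support ↔ w = u ∨ w ∈ c.tail.dropLast.support := by
  rw [mem_support_iff, ← hc.support_tail_dropLast_concat]
  simp only [List.mem_append, List.mem_singleton]
  tauto

theorem IsCycle.isChordless_tail_dropLast {u : V} {c : G.Walk u u} (hc : c.IsCycle)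
    (hcc : c.IsChordless) : c.tail.dropLast.IsChordless := by
  refine hc.isPath_tail.isChordless_of_isSubwalk (isSubwalk_take _ _) fun y z hy hz hyz ↦ ?_
  have := hcc.mem_edges (hc.mem_support_iff_tail_dropLast.2 (.inr hy))
    (hc.mem_support_iff_tail_dropLast.2 (.inr hz)) hyz
  rw [← c.cons_tail_eq hc.not_nil, edges_cons, List.mem_cons] at this
  refine this.resolve_left fun h ↦ hc.notMem_support_tail_dropLast ?_
  rcases Sym2.eq_iff.1 h with ⟨rfl, -⟩ | ⟨-, rfl⟩ <;> assumption

theorem length_tail_dropLast {u v : V} (p : G.Walk u v) :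
    p.tail.dropLast.length = p.length - 2 := by
  rw [length_dropLast, length_tail]
  omega

theorem mem_support_take_drop {u v w : V} {q : G.Walk u v} {i m : ℕ} (h : i + m ≤ q.length) :
    w ∈ ((q.drop i).take m).support ↔ ∃ t, i ≤ t ∧ t ≤ i + m ∧ q.getVert t = w := by
  have hlen : ((q.drop i).take m).length = m := by rw [take_length, drop_length]; omega
  rw [mem_support_iff_exists_getVert, hlen]
  constructor
  · rintro ⟨n, rfl, hn⟩
    refine ⟨i + n, by omega, by omega, ?_⟩
    rw [take_getVert, drop_getVert, min_eq_right hn]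
  · rintro ⟨t, hit, htm, rfl⟩
    refine ⟨t - i, ?_, by omega⟩
    rw [take_getVert, drop_getVert, min_eq_right (by omega), Nat.add_sub_cancel' hit]

theorem IsPath.ncard_setOf_mem_support {u v : V} {q : G.Walk u v} (hq : q.IsPath) (P : V → Prop)
    [DecidablePred P] :
    {w | w ∈ q.support ∧ P w}.ncard = #{i ∈ range (q.length + 1) | P (q.getVert i)} := by
  set S := {i ∈ range (q.length + 1) | P (q.getVert i)}
  have : {w | w ∈ q.support ∧ P w} = q.getVert '' S := by
    ext w
    simp only [S, Set.mem_ofPred_eq, mem_support_iff_exists_getVert, coe_filter, mem_range,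
      Set.mem_image]
    constructor
    · rintro ⟨⟨n, rfl, hn⟩, hP⟩
      exact ⟨n, ⟨by omega, hP⟩, rfl⟩
    · rintro ⟨n, ⟨hn, hP⟩, rfl⟩
      exact ⟨⟨n, rfl, by omega⟩, hP⟩
  rw [this, Set.InjOn.ncard_image, Set.ncard_coe_finset]
  refine hq.getVert_injOn.mono fun i hi ↦ ?_
  simp only [S, coe_filter, mem_range, Set.mem_ofPred_eq] at hi ⊢
  omega

theorem IsPath.exists_isSubwalk_ncard_interior {u v : V} {q : G.Walk u v} (hq : q.IsPath)
    {P : V → Prop} {ℓ : ℕ} (h : ℓ + 2 ≤ {w | w ∈ q.support ∧ P w}.ncard) :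
    ∃ (a b : V) (A : G.Walk a b), A.IsSubwalk q ∧ a ≠ b ∧ P a ∧ P b ∧
      {w | w ∈ A.support ∧ w ≠ a ∧ w ≠ b ∧ P w}.ncard = ℓ := by
  classical
  rw [hq.ncard_setOf_mem_support] at h
  set S := {i ∈ range (q.length + 1) | P (q.getVert i)}
  obtain ⟨i, hi, j, hj, hij, hcard⟩ := exists_lt_card_filter_between_eq h
  simp only [S, mem_filter, mem_range] at hi hj
  have hinj : ∀ {s t}, s ≤ q.length → t ≤ q.length → (q.getVert s = q.getVert t ↔ s = t) :=
    fun hs ht ↦ hq.getVert_injOn.eq_iff hs ht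
  have hm : i + (j - i) ≤ q.length := by omega
  have hb : (q.drop i).getVert (j - i) = q.getVert j := by
    rw [drop_getVert, Nat.add_sub_cancel' hij.le]
  refine ⟨q.getVert i, q.getVert j, ((q.drop i).take (j - i)).copy rfl hb,
    by simpa using ((isSubwalk_take _ _).trans (isSubwalk_drop q i)).copy rfl hb rfl rfl,
    ?_, hi.2, hj.2, ?_⟩
  · rw [Ne, hinj (by omega) (by omega)]; exact hij.ne
  have hinterior : {w | w ∈ (((q.drop i).take (j - i)).copy rfl hb).support ∧ w ≠ q.getVert i ∧
      w ≠ q.getVert j ∧ P w} = q.getVert '' ↑({t ∈ S | i < t ∧ t < j} : Finset ℕ) := by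
    ext w
    simp only [Set.mem_ofPred_eq, support_copy, mem_support_take_drop hm, S, coe_filter,
      mem_filter, mem_range, Set.mem_image]
    constructor
    · rintro ⟨⟨t, hit, htj, rfl⟩, hti, htj', hP⟩
      rw [Ne, hinj (by omega) (by omega)] at hti htj'
      exact ⟨t, ⟨⟨by omega, hP⟩, by omega, by omega⟩, rfl⟩
    · rintro ⟨t, ⟨⟨ht, hP⟩, hit, htj⟩, rfl⟩
      refine ⟨⟨t, hit.le, by omega, rfl⟩, ?_, ?_, hP⟩ <;>
        rw [Ne, hinj (by omega) (by omega)] <;> omega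
  rw [hinterior, Set.InjOn.ncard_image, Set.ncard_coe_finset, hcard]
  refine hq.getVert_injOn.mono fun t ht ↦ ?_
  simp only [S, coe_filter, mem_filter, mem_range, Set.mem_ofPred_eq] at ht ⊢
  omega

theorem IsCycle.exists_isChordless_arc [DecidableEq V] {u : V} {c : G.Walk u u} (hc : c.IsCycle)
    (hcc : c.IsChordless) {P : V → Prop} {ℓ : ℕ} (hP : ℓ + 2 ≤ {w | w ∈ c.support ∧ P w}.ncard)
    (hlen : ℓ + 3 ≤ c.length) :
    ∃ (a b : V) (A : G.Walk a b), A.IsPath ∧ A.IsChordless ∧ (∀ w ∈ A.support, w ∈ c.support) ∧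
      a ≠ b ∧ P a ∧ P b ∧ {w | w ∈ A.support ∧ w ≠ a ∧ w ≠ b ∧ P w}.ncard = ℓ := by
  obtain ⟨x, hx, hxP⟩ : ∃ x ∈ c.support, P x → ∀ w ∈ c.support, P w := by
    by_cases h : ∀ w ∈ c.support, P w
    · exact ⟨u, c.start_mem_support, fun _ ↦ h⟩
    · push Not at h
      obtain ⟨x, hx, hPx⟩ := h
      exact ⟨x, hx, fun h ↦ absurd h hPx⟩
  have hD : (c.rotate x hx).IsCycle := hc.rotate hx
  set Q := (c.rotate x hx).tail.dropLast
  have hQ : Q.IsPath := hD.isPath_tail.dropLast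
  have hmem : ∀ w, w ∈ c.support ↔ w = x ∨ w ∈ Q.support := fun w ↦
    (mem_support_rotate_iff c x hx).symm.trans hD.mem_support_iff_tail_dropLast
  have hcount : ℓ + 2 ≤ {w | w ∈ Q.support ∧ P w}.ncard := by
    by_cases hPx : P x
    · have : {w | w ∈ Q.support ∧ P w} = ↑Q.support.toFinset := by
        ext w
        simp only [Set.mem_ofPred_eq, List.coe_toFinset, and_iff_left_iff_imp]
        exact fun hw ↦ hxP hPx w ((hmem w).2 (.inr hw))
      rw [this, Set.ncard_coe_finset, List.toFinset_card_of_nodup hQ.support_nodup,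
        length_support, length_tail_dropLast, length_rotate]
      omega
    · have : {w | w ∈ Q.support ∧ P w} = {w | w ∈ c.support ∧ P w} := by
        ext w
        simp only [Set.mem_ofPred_eq, hmem]
        grind
      rwa [this]
  obtain ⟨a, b, A, hAQ, hab, ha, hb, hinterior⟩ := hQ.exists_isSubwalk_ncard_interior hcount
  exact ⟨a, b, A, isPath_of_isSubwalk hAQ hQ,
    (hD.isChordless_tail_dropLast (hcc.rotate hx)).of_isSubwalk hQ hAQ,
    fun w hw ↦ (hmem w).2 (.inr (hAQ.support_subset hw)), hab, ha, hb, hinterior⟩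

theorem isCycle_cons_concat {a b v : V} {P : G.Walk a b} (hP : P.IsPath) (hab : a ≠ b)
    (hv : v ∉ P.support) (hva : G.Adj v a) (hbv : G.Adj b v) :
    (cons hva (P.concat hbv)).IsCycle := by
  rw [cons_isCycle_iff, edges_concat, List.concat_eq_append, List.mem_append,
    List.mem_singleton, Sym2.eq_iff]
  refine ⟨hP.concat hv hbv, ?_⟩
  rintro (h | ⟨rfl, -⟩ | ⟨-, rfl⟩)
  · exact hv (P.fst_mem_support_of_mem_edges h)
  · exact hv P.end_mem_support
  · exact hab rfl

theorem setOf_isChord_cons_concat {a b v : V} {P : G.Walk a b} (hP : P.IsChordless)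
    (hv : v ∉ P.support) (hva : G.Adj v a) (hbv : G.Adj b v) :
    {e | (cons hva (P.concat hbv)).IsChord e} =
      (fun w ↦ s(v, w)) '' {w | w ∈ P.support ∧ w ≠ a ∧ w ≠ b ∧ G.Adj v w} := by
  have hspoke : ∀ w, w ∈ P.support → G.Adj v w →
      ((cons hva (P.concat hbv)).IsChord s(v, w) ↔ w ≠ a ∧ w ≠ b) := by
    intro w hw hvw
    have hnotP : s(v, w) ∉ P.edges := fun h ↦ hv (P.fst_mem_support_of_mem_edges h)
    simp only [isChord_sym2Mk, support_cons, support_concat, edges_cons, edges_concat,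
      List.concat_eq_append, List.mem_cons, List.mem_append, hvw, hnotP,
      Sym2.eq_iff, true_and, hw, true_or, or_true, and_true, false_or]
    grind
  have hsupp : ∀ x, x ∈ (cons hva (P.concat hbv)).support ↔ x = v ∨ x ∈ P.support := by
    simp only [support_cons, support_concat, List.mem_cons, List.mem_append]
    tauto
  ext e
  simp only [Set.mem_ofPred_eq, Set.mem_image]
  constructor
  · induction e using Sym2.ind with | _ y z => ?_
    intro h
    obtain ⟨hyz, hne, hy, hz⟩ := isChord_sym2Mk.1 h
    rcases (hsupp y).1 hy with rfl | hyP
    · have hzP := ((hsupp z).1 hz).resolve_left hyz.ne'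
      obtain ⟨hza, hzb⟩ := (hspoke z hzP hyz).1 h
      exact ⟨z, ⟨hzP, hza, hzb, hyz⟩, rfl⟩
    rcases (hsupp z).1 hz with rfl | hzP
    · rw [Sym2.eq_swap] at h ⊢
      obtain ⟨hya, hyb⟩ := (hspoke y hyP hyz.symm).1 h
      exact ⟨y, ⟨hyP, hya, hyb, hyz.symm⟩, rfl⟩
    · exact absurd (by simp [hP.mem_edges hyP hzP hyz]) hne
  · rintro ⟨w, ⟨hw, hwa, hwb, hvw⟩, rfl⟩
    exact (hspoke w hw hvw).2 ⟨hwa, hwb⟩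

end SimpleGraph.Walk

open SimpleGraph Walk

section

variable {V : Type*} {G : SimpleGraph V}

theorem cycleChords_eq_setOf_isChord {u : V} (C : G.Walk u u) :
    cycleChords G C = {e | C.IsChord e} := by
  ext e
  induction e using Sym2.ind with | _ y z => ?_
  simp only [cycleChords, Set.mem_ofPred_eq, isChord_sym2Mk, Sym2.mem_iff, forall_eq_or_imp,
    forall_eq]
  tauto

theorem cycleChords_eq_empty_iff {u : V} (C : G.Walk u u) :
    cycleChords G C = ∅ ↔ C.IsChordless := by
  rw [cycleChords_eq_setOf_isChord, Set.eq_empty_iff_forall_notMem]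
  rfl

theorem ncard_cycleChords_cons_concat {a b v : V} {P : G.Walk a b} (hP : P.IsChordless)
    (hv : v ∉ P.support) (hva : G.Adj v a) (hbv : G.Adj b v) :
    (cycleChords G (cons hva (P.concat hbv))).ncard =
      {w | w ∈ P.support ∧ w ≠ a ∧ w ≠ b ∧ G.Adj v w}.ncard := by
  rw [cycleChords_eq_setOf_isChord, setOf_isChord_cons_concat hP hv, Set.InjOn.ncard_image]
  exact fun _ _ _ _ h ↦ Sym2.congr_right.1 h

end

theorem stmt19_general {V : Type*} (G : SimpleGraph V) (k : ℕ) (u : V)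
    (C : G.Walk u u) (hC : C.IsCycle) (hInd : cycleChords G C = ∅)
    (hlen : k + 4 ≤ C.length) (v : V) (hv : v ∉ C.support)
    (hdeg : k + 2 ≤ {w | w ∈ C.support ∧ G.Adj v w}.ncard) :
    ∀ l : ℕ, l ≤ k →
      ∃ (w : V) (C' : G.Walk w w), C'.IsCycle ∧ (cycleChords G C').ncard = l := by
  classical
  intro l hl
  obtain ⟨a, b, A, hA, hAc, hAC, hab, hva, hvb, hinterior⟩ :=
    hC.exists_isChordless_arc ((cycleChords_eq_empty_iff C).1 hInd) (P := G.Adj v) (ℓ := l)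
      (by omega) (by omega)
  have hvA : v ∉ A.support := fun h ↦ hv (hAC v h)
  exact ⟨v, cons hva (A.concat hvb.symm), isCycle_cons_concat hA hab hvA hva hvb.symm,
    (ncard_cycleChords_cons_concat hAc hvA hva hvb.symm).trans hinterior⟩

theorem stmt19 {V : Type*} [Fintype V] (G : SimpleGraph V) (k : ℕ) (u : V)
    (C : G.Walk u u) (hC : C.IsCycle) (hInd : cycleChords G C = ∅)
    (hlen : k + 4 ≤ C.length) (v : V) (hv : v ∉ C.support)
    (hdeg : k + 2 ≤ {w | w ∈ C.support ∧ G.Adj v w}.ncard) :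
    ∀ l : ℕ, l ≤ k →
      ∃ (w : V) (C' : G.Walk w w), C'.IsCycle ∧ (cycleChords G C').ncard = l :=
  stmt19_general G k u C hC hInd hlen v hv hdeg
end
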